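/- arXiv:2008.01399 — 4 statements merged into one kernel-verified Lean document; each statement's English description precedes it below -/
import Mathlib

section
/- With the same setup, the point w_y ∈ [x,y] with d(y,w_y) = (x|ξ)_y satisfies |b(w_y) − (x|y)_b| ≤ 16δ, where (x|y)_b = (1/2)(b(x) + b(y) − d(x,y)). -/
open Filter Set Metric Real MeasureTheory

noncomputable section

/-- The Gromov product `(x|y)_o`. -/
def gp {X : Type*} [MetricSpace X] (o x y : X) : ℝ :=
  (dist x o + dist y o - dist x y) / 2

/-- A Gromov sequence (converging to a point of the boundary at infinity). -/
def IsGromovSeq {X : Type*} [MetricSpace X] (o : X) (s : ℕ → X) : Prop :=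
  ∀ N : ℝ, ∃ I : ℕ, ∀ i j : ℕ, I ≤ i → I ≤ j → N ≤ gp o (s i) (s j)

/-- Equivalence of Gromov sequences. -/
def GromovEquiv {X : Type*} [MetricSpace X] (o : X) (s t : ℕ → X) : Prop :=
  Tendsto (fun n => gp o (s n) (t n)) atTop atTop

/-- Extended Gromov product `(x|ξ)_w` of a point `x` with the boundary point `ξ`
represented by the Gromov sequence `s`. -/
def egp {X : Type*} [MetricSpace X] (w x : X) (s : ℕ → X) : ℝ :=
  sInf {r | ∃ t : ℕ → X, GromovEquiv w s t ∧ r = liminf (fun n => gp w x (t n)) atTop}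

/-- Extended Gromov product `(ξ|η)_w` of two boundary points represented by Gromov
sequences `s` and `t`. -/
def egp2 {X : Type*} [MetricSpace X] (w : X) (s t : ℕ → X) : ℝ :=
  sInf {r | ∃ s' t' : ℕ → X, GromovEquiv w s s' ∧ GromovEquiv w t t' ∧
    r = liminf (fun n => gp w (s' n) (t' n)) atTop}

/-- The Busemann function based at the boundary point represented by `s`, with base point `o`:
`b(x) = (ξ|o)_x - (ξ|x)_o`. -/
def busemann {X : Type*} [MetricSpace X] (o : X) (s : ℕ → X) (x : X) : ℝ :=
  egp x o s - egp o x s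

/-- `δ`-hyperbolicity in the sense of Gromov. -/
def IsDeltaHyp (X : Type*) [MetricSpace X] (δ : ℝ) : Prop :=
  ∀ o x y z : X, min (gp o x z) (gp o z y) - δ ≤ gp o x y

/-- A geodesic metric space: every pair of points is joined by a geodesic. -/
def GeodesicSpace (X : Type*) [MetricSpace X] : Prop :=
  ∀ x y : X, ∃ γ : ℝ → X, γ 0 = x ∧ γ (dist x y) = y ∧
    ∀ a ∈ Icc (0:ℝ) (dist x y), ∀ b ∈ Icc (0:ℝ) (dist x y), dist (γ a) (γ b) = |a - b|

namespace BusAux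

lemma eps_le {a b : ℝ} (h : ∀ ε : ℝ, 0 < ε → a ≤ b + ε) : a ≤ b := by
  by_contra hc
  push_neg at hc
  have := h ((a - b) / 2) (by linarith)
  linarith

lemma li_ge {u : ℕ → ℝ} {C a : ℝ} (hC : ∀ n, u n ≤ C) (h : ∀ᶠ n in atTop, a ≤ u n) :
    a ≤ liminf u atTop :=
  le_liminf_of_le (isBoundedUnder_of ⟨C, hC⟩).isCoboundedUnder_ge h

lemma li_le {u : ℕ → ℝ} {c a : ℝ} (hc : ∀ n, c ≤ u n) (h : ∀ᶠ n in atTop, u n ≤ a) :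
    liminf u atTop ≤ a :=
  liminf_le_of_frequently_le h.frequently (isBoundedUnder_of ⟨c, hc⟩)

lemma ev_ge_li {u : ℕ → ℝ} {c : ℝ} (hc : ∀ n, c ≤ u n) {ε : ℝ} (hε : 0 < ε) :
    ∀ᶠ n in atTop, liminf u atTop - ε ≤ u n := by
  have h := eventually_lt_of_lt_liminf
      (show liminf u atTop - ε < liminf u atTop by linarith)
      (isBoundedUnder_of ⟨c, fun n => hc n⟩)
  exact h.mono fun n hn => le_of_lt hn

lemma freq_le_li {u : ℕ → ℝ} {C : ℝ} (hC : ∀ n, u n ≤ C) {ε : ℝ} (hε : 0 < ε) :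
    ∃ᶠ n in atTop, u n < liminf u atTop + ε :=
  frequently_lt_of_liminf_lt (isBoundedUnder_of ⟨C, hC⟩).isCoboundedUnder_ge
    (by linarith)

variable {X : Type*} [MetricSpace X]

lemma gp_nonneg (o x y : X) : 0 ≤ gp o x y := by
  have h1 := dist_triangle x o y
  have h2 := dist_comm o y
  simp only [gp]; linarith

lemma gp_le (o x y : X) : gp o x y ≤ dist x o := by
  have h1 := dist_triangle y x o
  have h2 := dist_comm x y
  simp only [gp]; linarith

lemma gp_self (o x : X) : gp o x x = dist x o := by simp [gp]

lemma gp_add (x y z : X) : gp x y z + gp y x z = dist x y := by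
  have h1 := dist_comm x y
  have h2 := dist_comm z x
  have h3 := dist_comm z y
  simp only [gp]; linarith

lemma gp_diff (o z y : X) : gp z o y - gp o z y = dist z y - dist o y := by
  have h1 := dist_comm o z
  have h2 := dist_comm y z
  have h3 := dist_comm y o
  simp only [gp]; linarith

lemma gp_base (o w x y : X) : gp o x y - dist o w ≤ gp w x y := by
  have h1 := dist_triangle x w o
  have h2 := dist_triangle y w o
  have h3 := dist_comm w o
  simp only [gp]; linarith

/-- Translate a Gromov sequence condition to another base point. -/
lemma seq_base {o : X} {s : ℕ → X} (hs : IsGromovSeq o s) (w : X) :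
    ∀ N : ℝ, ∃ I : ℕ, ∀ i j : ℕ, I ≤ i → I ≤ j → N ≤ gp w (s i) (s j) := by
  intro N
  obtain ⟨I, hI⟩ := hs (N + dist o w)
  exact ⟨I, fun i j hi hj => le_trans (by linarith [hI i j hi hj])
    (gp_base o w (s i) (s j))⟩

lemma equiv_self {w : X} {s : ℕ → X}
    (hs : ∀ N : ℝ, ∃ I : ℕ, ∀ i j : ℕ, I ≤ i → I ≤ j → N ≤ gp w (s i) (s j)) :
    GromovEquiv w s s := by
  rw [GromovEquiv, Filter.tendsto_atTop]
  intro b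
  obtain ⟨I, hI⟩ := hs b
  exact eventually_atTop.2 ⟨I, fun n hn => hI n n hn hn⟩

/-- The key sandwich: `egp w x s` is within `δ` below `liminf gp w x (s n)`,
and oscillation control. -/
lemma sandwich {δ : ℝ} (hδ : 0 ≤ δ) (hhyp : IsDeltaHyp X δ) (w x : X) {s : ℕ → X}
    (hs : ∀ N : ℝ, ∃ I : ℕ, ∀ i j : ℕ, I ≤ i → I ≤ j → N ≤ gp w (s i) (s j)) :
    liminf (fun n => gp w x (s n)) atTop - δ ≤ egp w x s ∧
    egp w x s ≤ liminf (fun n => gp w x (s n)) atTop ∧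
    ∀ ε > 0, ∀ᶠ n in atTop,
      gp w x (s n) ≤ liminf (fun n => gp w x (s n)) atTop + δ + ε := by
  set L := liminf (fun n => gp w x (s n)) atTop with hL
  have hub : ∀ n, gp w x (s n) ≤ dist x w := fun n => gp_le w x (s n)
  have hlb : ∀ n, (0:ℝ) ≤ gp w x (s n) := fun n => gp_nonneg w x (s n)
  have hmem : L ∈ {r | ∃ t : ℕ → X, GromovEquiv w s t ∧
      r = liminf (fun n => gp w x (t n)) atTop} := ⟨s, equiv_self hs, rfl⟩
  have hbdd : ∀ r ∈ {r | ∃ t : ℕ → X, GromovEquiv w s t ∧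
      r = liminf (fun n => gp w x (t n)) atTop}, L - δ ≤ r := by
    rintro r ⟨t, ht, rfl⟩
    apply eps_le
    intro ε hε
    have hev1 : ∀ᶠ n in atTop, dist x w ≤ gp w (s n) (t n) :=
      ht.eventually_ge_atTop (dist x w)
    have hev2 : ∀ᶠ n in atTop, L - ε ≤ gp w x (s n) := ev_ge_li hlb hε
    have hstep : ∀ᶠ n in atTop, L - ε - δ ≤ gp w x (t n) := by
      filter_upwards [hev1, hev2] with n h1 h2
      have h3 := hhyp w x (t n) (s n)
      have h4 : min (gp w x (s n)) (gp w (s n) (t n)) = gp w x (s n) :=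
        min_eq_left (le_trans (hub n) h1)
      rw [h4] at h3
      linarith
    have := li_ge (fun n => gp_le w x (t n)) hstep
    linarith
  refine ⟨le_csInf ⟨L, hmem⟩ hbdd, csInf_le ⟨L - δ, hbdd⟩ hmem, ?_⟩
  intro ε hε
  obtain ⟨I, hI⟩ := hs (dist x w)
  obtain ⟨j, hjI, hj⟩ := frequently_atTop.1 (freq_le_li hub hε) I
  rw [eventually_atTop]
  refine ⟨I, fun i hi => ?_⟩
  have h3 := hhyp w x (s j) (s i)
  have h4 : min (gp w x (s i)) (gp w (s i) (s j)) = gp w x (s i) :=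
    min_eq_left (le_trans (hub i) (hI i j hi hjI))
  rw [h4] at h3
  linarith


/-- Comparison of `liminf (d(z,s n) - d(o,s n))` with the difference of liminf
Gromov products. -/
lemma F_bds {δ : ℝ} (hδ : 0 ≤ δ) (hhyp : IsDeltaHyp X δ) (o z : X) {s : ℕ → X}
    (hs : IsGromovSeq o s) :
    liminf (fun n => gp z o (s n)) atTop - liminf (fun n => gp o z (s n)) atTop - δ ≤
      liminf (fun n => dist z (s n) - dist o (s n)) atTop ∧
    liminf (fun n => dist z (s n) - dist o (s n)) atTop ≤
      liminf (fun n => gp z o (s n)) atTop - liminf (fun n => gp o z (s n)) atTop + δ := by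
  obtain ⟨-, -, hAosc⟩ := sandwich hδ hhyp z o (seq_base hs z)
  obtain ⟨-, -, hBosc⟩ := sandwich hδ hhyp o z (seq_base hs o)
  set A := liminf (fun n => gp z o (s n)) atTop
  set B := liminf (fun n => gp o z (s n)) atTop
  have hfid : ∀ n, dist z (s n) - dist o (s n) = gp z o (s n) - gp o z (s n) :=
    fun n => (gp_diff o z (s n)).symm
  have hflb : ∀ n, -(dist z o) ≤ dist z (s n) - dist o (s n) := fun n =>
    neg_le_of_abs_le (abs_dist_sub_le z o (s n))
  have hfub : ∀ n, dist z (s n) - dist o (s n) ≤ dist z o := fun n =>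
    le_of_abs_le (abs_dist_sub_le z o (s n))
  constructor
  · apply eps_le
    intro ε hε
    have ev1 : ∀ᶠ n in atTop, A - ε/2 ≤ gp z o (s n) :=
      ev_ge_li (fun n => gp_nonneg z o (s n)) (by linarith)
    have ev2 : ∀ᶠ n in atTop, gp o z (s n) ≤ B + δ + ε/2 := hBosc (ε/2) (by linarith)
    have hstep : ∀ᶠ n in atTop, A - B - δ - ε ≤ dist z (s n) - dist o (s n) := by
      filter_upwards [ev1, ev2] with n h1 h2
      rw [hfid n]; linarith
    have := li_ge hfub hstep
    linarith
  · apply eps_le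
    intro ε hε
    have ev1 : ∀ᶠ n in atTop, gp z o (s n) ≤ A + δ + ε/2 := hAosc (ε/2) (by linarith)
    have ev2 : ∀ᶠ n in atTop, B - ε/2 ≤ gp o z (s n) :=
      ev_ge_li (fun n => gp_nonneg o z (s n)) (by linarith)
    have hstep : ∀ᶠ n in atTop, dist z (s n) - dist o (s n) ≤ A - B + δ + ε := by
      filter_upwards [ev1, ev2] with n h1 h2
      rw [hfid n]; linarith
    have := li_le hflb hstep
    linarith

/-- The Busemann function is within `2δ` of `liminf (d(z,s n) - d(o,s n))`. -/
lemma busemann_F {δ : ℝ} (hδ : 0 ≤ δ) (hhyp : IsDeltaHyp X δ) (o z : X) {s : ℕ → X}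
    (hs : IsGromovSeq o s) :
    |busemann o s z - liminf (fun n => dist z (s n) - dist o (s n)) atTop| ≤ 2 * δ := by
  obtain ⟨hA1, hA2, -⟩ := sandwich hδ hhyp z o (seq_base hs z)
  obtain ⟨hB1, hB2, -⟩ := sandwich hδ hhyp o z (seq_base hs o)
  obtain ⟨hF1, hF2⟩ := F_bds hδ hhyp o z hs
  rw [abs_le, busemann]
  constructor <;> linarith

/-- Eventual upper bound for `d(z,s n) - d(o,s n)` in terms of its liminf. -/
lemma f_ev_ub {δ : ℝ} (hδ : 0 ≤ δ) (hhyp : IsDeltaHyp X δ) (o z : X) {s : ℕ → X}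
    (hs : IsGromovSeq o s) {ε : ℝ} (hε : 0 < ε) :
    ∀ᶠ n in atTop, dist z (s n) - dist o (s n) ≤
      liminf (fun n => dist z (s n) - dist o (s n)) atTop + 2 * δ + ε := by
  obtain ⟨-, -, hAosc⟩ := sandwich hδ hhyp z o (seq_base hs z)
  obtain ⟨hF1, -⟩ := F_bds hδ hhyp o z hs
  have ev1 : ∀ᶠ n in atTop, gp z o (s n) ≤
      liminf (fun n => gp z o (s n)) atTop + δ + ε/2 := hAosc (ε/2) (by linarith)
  have ev2 : ∀ᶠ n in atTop,
      liminf (fun n => gp o z (s n)) atTop - ε/2 ≤ gp o z (s n) :=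
    ev_ge_li (fun n => gp_nonneg o z (s n)) (by linarith)
  filter_upwards [ev1, ev2] with n h1 h2
  have hfid := gp_diff o z (s n)
  linarith

end BusAux

/-- With the setup of the extended geodesic triangle `(x, y, ξ)`, the point
`w_y ∈ [x,y]` with `d(y, w_y) = (x|ξ)_y` satisfies `|b(w_y) − (x|y)_b| ≤ 16δ`, where
`(x|y)_b = (1/2)(b(x) + b(y) − d(x,y))` and `b` is the Busemann function based at `ξ`. -/
theorem busemann_at_projection {X : Type*} [MetricSpace X] [ProperSpace X]
    (δ : ℝ) (hδ : 0 ≤ δ) (hhyp : IsDeltaHyp X δ) (hgeo : GeodesicSpace X)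
    (o : X) (s : ℕ → X) (hs : IsGromovSeq o s)
    (x y : X) (γ : ℝ → X) (hγ0 : γ 0 = x) (hγ1 : γ (dist x y) = y)
    (hiso : ∀ a ∈ Icc (0:ℝ) (dist x y), ∀ b ∈ Icc (0:ℝ) (dist x y),
      dist (γ a) (γ b) = |a - b|)
    (he : egp y x s ∈ Icc (0:ℝ) (dist x y)) :
    |busemann o s (γ (dist x y - egp y x s)) -
        (busemann o s x + busemann o s y - dist x y) / 2| ≤ 16 * δ := by
  rw [Set.mem_Icc] at he
  obtain ⟨he0, hed⟩ := he
  have hsy := BusAux.seq_base hs y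
  obtain ⟨hL1, hL2, hLosc⟩ := BusAux.sandwich hδ hhyp y x hsy
  have hbx := BusAux.busemann_F hδ hhyp o x hs
  have hby := BusAux.busemann_F hδ hhyp o y hs
  have hbw := BusAux.busemann_F hδ hhyp o (γ (dist x y - egp y x s)) hs
  set d := dist x y with hd
  set e := egp y x s with heq
  set w := γ (d - e) with hw
  set L := liminf (fun n => gp y x (s n)) atTop with hLdef
  set Fx := liminf (fun n => dist x (s n) - dist o (s n)) atTop with hFx
  set Fy := liminf (fun n => dist y (s n) - dist o (s n)) atTop with hFy
  set Fw := liminf (fun n => dist w (s n) - dist o (s n)) atTop with hFw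
  have hdnn : (0:ℝ) ≤ d := by rw [hd]; exact dist_nonneg
  have hmem0 : (0:ℝ) ∈ Icc (0:ℝ) d := ⟨le_rfl, hdnn⟩
  have hmemd : d ∈ Icc (0:ℝ) d := ⟨hdnn, le_rfl⟩
  have hmemw : d - e ∈ Icc (0:ℝ) d := ⟨by linarith, by linarith⟩
  have dxw : dist x w = d - e := by
    have h := hiso 0 hmem0 (d - e) hmemw
    rw [hγ0] at h
    rw [hw, h, abs_of_nonpos (by linarith)]
    ring
  have dyw : dist y w = e := by
    have h := hiso d hmemd (d - e) hmemw
    rw [hγ1] at h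
    rw [hw, h, abs_of_nonneg (by linarith)]
    ring
  have gpy : gp y w x = e := by
    simp only [gp]
    rw [dist_comm w y, dyw, dist_comm w x, dxw, ← hd]
    ring
  have gpx : gp x w y = d - e := by
    simp only [gp]
    rw [dist_comm w x, dxw, dist_comm w y, dyw, dist_comm y x, ← hd]
    ring
  have hdwy : dist w y = e := (dist_comm w y).trans dyw
  have hdwx : dist w x = d - e := (dist_comm w x).trans dxw
  have hg : ∀ ε : ℝ, 0 < ε → ∀ᶠ n in atTop,
      gp w x (s n) + gp w y (s n) ≤ 4 * δ + 2 * ε := by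
    intro ε hε
    have ev1 : ∀ᶠ n in atTop, L - ε ≤ gp y x (s n) :=
      BusAux.ev_ge_li (fun n => BusAux.gp_nonneg y x (s n)) hε
    have ev2 := hLosc ε hε
    filter_upwards [ev1, ev2] with n h1 h2
    have hy := hhyp y w (s n) x
    have hminy : e - ε ≤ min (gp y w x) (gp y x (s n)) :=
      le_min (by rw [gpy]; linarith) (by linarith)
    have haddy := BusAux.gp_add w y (s n)
    have haddxy := BusAux.gp_add x y (s n)
    have hx := hhyp x w (s n) y
    have hminx : d - e - 2 * δ - ε ≤ min (gp x w y) (gp x y (s n)) := by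
      apply le_min
      · rw [gpx]; linarith
      · rw [← hd] at haddxy; linarith
    have haddx := BusAux.gp_add w x (s n)
    rw [hdwy] at haddy
    rw [hdwx] at haddx
    linarith
  have hid : ∀ n : ℕ, dist w (s n) - dist o (s n) =
      (gp w x (s n) + gp w y (s n)) +
      ((dist x (s n) - dist o (s n)) + (dist y (s n) - dist o (s n)) - d) / 2 := by
    intro n
    simp only [gp]
    rw [dxw, dyw, dist_comm (s n) w]
    ring
  have hFwlb : (Fx + Fy - d) / 2 ≤ Fw := by
    apply BusAux.eps_le
    intro ε hε
    have ev1 : ∀ᶠ n in atTop, Fx - ε ≤ dist x (s n) - dist o (s n) :=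
      BusAux.ev_ge_li (fun n => neg_le_of_abs_le (abs_dist_sub_le x o (s n))) hε
    have ev2 : ∀ᶠ n in atTop, Fy - ε ≤ dist y (s n) - dist o (s n) :=
      BusAux.ev_ge_li (fun n => neg_le_of_abs_le (abs_dist_sub_le y o (s n))) hε
    have hstep : ∀ᶠ n in atTop,
        (Fx + Fy - d) / 2 - ε ≤ dist w (s n) - dist o (s n) := by
      filter_upwards [ev1, ev2] with n h1 h2
      rw [hid n]
      have g1 := BusAux.gp_nonneg w x (s n)
      have g2 := BusAux.gp_nonneg w y (s n)
      linarith
    have hfin : (Fx + Fy - d) / 2 - ε ≤ Fw :=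
      BusAux.li_ge (fun n => le_of_abs_le (abs_dist_sub_le w o (s n))) hstep
    linarith
  have hFwub : Fw ≤ (Fx + Fy - d) / 2 + 6 * δ := by
    apply BusAux.eps_le
    intro ε hε
    have hε3 : (0:ℝ) < ε / 3 := by linarith
    have ev0 := hg (ε / 3) hε3
    have ev1 : ∀ᶠ n in atTop,
        dist x (s n) - dist o (s n) ≤ Fx + 2 * δ + ε / 3 :=
      BusAux.f_ev_ub hδ hhyp o x hs hε3
    have ev2 : ∀ᶠ n in atTop,
        dist y (s n) - dist o (s n) ≤ Fy + 2 * δ + ε / 3 :=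
      BusAux.f_ev_ub hδ hhyp o y hs hε3
    have hstep : ∀ᶠ n in atTop,
        dist w (s n) - dist o (s n) ≤ (Fx + Fy - d) / 2 + 6 * δ + ε := by
      filter_upwards [ev0, ev1, ev2] with n h0 h1 h2
      rw [hid n]
      linarith
    have hfin : Fw ≤ (Fx + Fy - d) / 2 + 6 * δ + ε :=
      BusAux.li_le (fun n => neg_le_of_abs_le (abs_dist_sub_le w o (s n))) hstep
    linarith
  have h1 := abs_le.mp hbw
  have h2 := abs_le.mp hbx
  have h3 := abs_le.mp hby
  rw [abs_le]
  constructor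
  · linarith [h1.1, h2.2, h3.2]
  · linarith [h1.2, h2.1, h3.1]
end
end

section
/- Let c: [0,∞) → X be a geodesic ray in a proper geodesic δ-hyperbolic space X converging to a boundary point η ≠ ξ, let b be a Busemann function based at ξ with base point o, and let o' = c(0). Then for all sufficiently large t, b(c(t)) ≥ t − d(o,o') − 2(ξ|η)_o − 8δ. -/
open Filter Set Metric Real MeasureTheory

noncomputable section

/-! Let `A = liminf (s n | t n)_o`. By thin quadrilaterals, the diagonal products of any two
pairs of sequences representing `ξ` and `η` are eventually within `2δ` of each other, so
`(ξ|η)_o ≥ A - 2δ`. Along the ray `(c u | η)_o ≥ u - d(o, c 0) - δ`, so for large `u` the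
`δ`-inequality for `c u, s n, t n` forces `liminf (c u | s n)_o ≤ A + δ`. Finally
`b(x) ≥ d(o, x) - 2 liminf (x | s n)_o - δ`: `(ξ|x)_o` is at most this liminf, while
`(o | t n)_x = d(o, x) - (x | t n)_o` and `(x | t n)_o ≤ (x | s m)_o + δ` as soon as
`(t n | s m)_o ≥ d(o, x)`. -/

section GromovProduct

variable {X : Type*} [MetricSpace X]

lemma gp_comm (o x y : X) : gp o x y = gp o y x := by
  unfold gp; rw [dist_comm x y]; ring

lemma gp_nonneg (o x y : X) : 0 ≤ gp o x y := by
  have := dist_triangle_right x y o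
  unfold gp; linarith

lemma gp_le_dist_left (o x y : X) : gp o x y ≤ dist x o := by
  have := dist_triangle_left y o x
  unfold gp; linarith

lemma gp_sub_dist_le_gp (o w x y : X) : gp o x y - dist o w ≤ gp w x y := by
  have := dist_triangle_right x o w
  have := dist_triangle_right y o w
  unfold gp; linarith

lemma gp_add_gp_eq_dist (o x z : X) : gp x o z + gp o x z = dist o x := by
  unfold gp
  rw [dist_comm x o, dist_comm z o, dist_comm x z]
  ring

lemma isBoundedUnder_ge_gp (o : X) (x y : ℕ → X) :
    IsBoundedUnder (· ≥ ·) atTop (fun n => gp o (x n) (y n)) :=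
  isBoundedUnder_of ⟨0, fun n => gp_nonneg o (x n) (y n)⟩

lemma isCoboundedUnder_ge_gp (o x : X) (y : ℕ → X) :
    IsCoboundedUnder (· ≥ ·) atTop (fun n => gp o x (y n)) :=
  isCoboundedUnder_ge_of_le atTop fun n => gp_le_dist_left o x (y n)

end GromovProduct

section GromovSequences

variable {X : Type*} [MetricSpace X] {δ : ℝ} {o : X} {s s' t t' : ℕ → X}

lemma IsGromovSeq.gromovEquiv_self (hs : IsGromovSeq o s) : GromovEquiv o s s :=
  tendsto_atTop.2 fun N =>
    let ⟨I, hI⟩ := hs N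
    eventually_atTop.2 ⟨I, fun n hn => hI n n hn hn⟩

lemma GromovEquiv.change_base (h : GromovEquiv o s t) (w : X) : GromovEquiv w s t :=
  tendsto_atTop_mono (fun n => gp_sub_dist_le_gp o w (s n) (t n))
    (tendsto_atTop_add_const_right _ _ h)

lemma frequently_gp_le_of_not_gromovEquiv (hne : ¬ GromovEquiv o s t) :
    ∃ B, ∃ᶠ n in atTop, gp o (s n) (t n) ≤ B := by
  by_contra! h
  exact hne (tendsto_atTop.2 fun B => (h B).mono fun _ => le_of_lt)

lemma IsDeltaHyp.exists_le_gp_of_gromovEquiv (hhyp : IsDeltaHyp X δ) (hs : IsGromovSeq o s)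
    (h : GromovEquiv o s s') (R : ℝ) :
    ∃ I, ∀ n m, I ≤ n → I ≤ m → R ≤ gp o (s n) (s' m) := by
  obtain ⟨I, hI⟩ := hs (R + δ)
  obtain ⟨J, hJ⟩ := eventually_atTop.1 (tendsto_atTop.1 h (R + δ))
  refine ⟨max I J, fun n m hn hm => ?_⟩
  have := hhyp o (s n) (s' m) (s m)
  have := le_min (hI n m (le_of_max_le_left hn) (le_of_max_le_left hm))
    (hJ m (le_of_max_le_right hm))
  linarith

lemma IsDeltaHyp.min_sub_two_mul_le (hδ : 0 ≤ δ) (hhyp : IsDeltaHyp X δ) (o x x' y' y : X) :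
    min (gp o x x') (min (gp o x' y') (gp o y' y)) - 2 * δ ≤ gp o x y := by
  have h₁ := hhyp o x y x'
  have h₂ := hhyp o x' y y'
  have := min_le_left (gp o x x') (min (gp o x' y') (gp o y' y))
  have := min_le_right (gp o x x') (min (gp o x' y') (gp o y' y))
  have : min (gp o x x') (min (gp o x' y') (gp o y' y)) - δ ≤ min (gp o x x') (gp o x' y) :=
    le_min (by linarith) (by linarith)
  linarith

lemma IsDeltaHyp.eventually_le_gp_of_frequently_le (hδ : 0 ≤ δ) (hhyp : IsDeltaHyp X δ)
    (hs : IsGromovSeq o s) (ht : IsGromovSeq o t) (hss' : GromovEquiv o s s')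
    (htt' : GromovEquiv o t t') {a : ℝ}
    (ha : ∃ᶠ n in atTop, a ≤ gp o (s n) (t n)) :
    ∀ᶠ m in atTop, a - 2 * δ ≤ gp o (s' m) (t' m) := by
  obtain ⟨I, hI⟩ := hhyp.exists_le_gp_of_gromovEquiv hs hss' a
  obtain ⟨J, hJ⟩ := hhyp.exists_le_gp_of_gromovEquiv ht htt' a
  obtain ⟨n, han, hn⟩ := (ha.and_eventually (eventually_ge_atTop (max I J))).exists
  filter_upwards [eventually_ge_atTop (max I J)] with m hm
  have := hhyp.min_sub_two_mul_le hδ o (s' m) (s n) (t n) (t' m)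
  rw [gp_comm o (s' m)] at this
  have := le_min (hI n m (le_of_max_le_left hn) (le_of_max_le_left hm))
    (le_min han (hJ n m (le_of_max_le_right hn) (le_of_max_le_right hm)))
  linarith

lemma IsDeltaHyp.eventually_gp_le_of_frequently_le (hδ : 0 ≤ δ) (hhyp : IsDeltaHyp X δ)
    (hs : IsGromovSeq o s) (ht : IsGromovSeq o t) (hss' : GromovEquiv o s s')
    (htt' : GromovEquiv o t t') {b : ℝ}
    (hb : ∃ᶠ n in atTop, gp o (s n) (t n) ≤ b) :
    ∀ᶠ m in atTop, gp o (s' m) (t' m) ≤ b + 2 * δ := by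
  obtain ⟨I, hI⟩ := hhyp.exists_le_gp_of_gromovEquiv hs hss' (b + 2 * δ + 1)
  obtain ⟨J, hJ⟩ := hhyp.exists_le_gp_of_gromovEquiv ht htt' (b + 2 * δ + 1)
  obtain ⟨n, hbn, hn⟩ := (hb.and_eventually (eventually_ge_atTop (max I J))).exists
  filter_upwards [eventually_ge_atTop (max I J)] with m hm
  by_contra! hlt
  have := hhyp.min_sub_two_mul_le hδ o (s n) (s' m) (t' m) (t n)
  rw [gp_comm o (t' m)] at this
  have h₁ := hI n m (le_of_max_le_left hn) (le_of_max_le_left hm)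
  have h₂ := hJ n m (le_of_max_le_right hn) (le_of_max_le_right hm)
  have := lt_min (by linarith : b + 2 * δ < gp o (s n) (s' m))
    (lt_min hlt (by linarith : b + 2 * δ < gp o (t n) (t' m)))
  linarith

end GromovSequences

section Limits

variable {X : Type*} [MetricSpace X] {δ : ℝ} {o : X} {s t : ℕ → X}

lemma IsDeltaHyp.liminf_sub_le_egp2 (hδ : 0 ≤ δ) (hhyp : IsDeltaHyp X δ) (hs : IsGromovSeq o s)
    (ht : IsGromovSeq o t) (hne : ¬ GromovEquiv o s t) :
    liminf (fun n => gp o (s n) (t n)) atTop - 2 * δ ≤ egp2 o s t := by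
  obtain ⟨B, hB⟩ := frequently_gp_le_of_not_gromovEquiv hne
  refine le_csInf ⟨_, s, t, hs.gromovEquiv_self, ht.gromovEquiv_self, rfl⟩ ?_
  rintro _ ⟨s', t', hss', htt', rfl⟩
  have hcobdd : IsCoboundedUnder (· ≥ ·) atTop (fun m => gp o (s' m) (t' m)) :=
    IsCobounded.of_frequently_le
      (hhyp.eventually_gp_le_of_frequently_le hδ hs ht hss' htt' hB).frequently
  refine le_of_forall_lt_imp_le_of_dense fun c hc => ?_
  have hfreq : ∃ᶠ n in atTop, c + 2 * δ ≤ gp o (s n) (t n) :=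
    ((eventually_lt_of_lt_liminf (by linarith) (isBoundedUnder_ge_gp o s t)).mono
      fun _ => le_of_lt).frequently
  exact le_liminf_of_le hcobdd
    ((hhyp.eventually_le_gp_of_frequently_le hδ hs ht hss' htt' hfreq).mono fun _ h => by linarith)

lemma egp_le_liminf {w : X} (hst : GromovEquiv w s t) (x : X) :
    egp w x s ≤ liminf (fun n => gp w x (t n)) atTop :=
  csInf_le ⟨0, by
    rintro _ ⟨r, -, rfl⟩
    exact le_liminf_of_le (isCoboundedUnder_ge_gp w x r)
      (Eventually.of_forall fun n => gp_nonneg w x (r n))⟩ ⟨t, hst, rfl⟩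

lemma IsDeltaHyp.dist_sub_liminf_le_egp (hhyp : IsDeltaHyp X δ) (hs : IsGromovSeq o s) (x : X) :
    dist o x - liminf (fun n => gp o x (s n)) atTop - δ ≤ egp x o s := by
  refine le_csInf ⟨_, s, hs.gromovEquiv_self.change_base x, rfl⟩ ?_
  rintro _ ⟨t, hst, rfl⟩
  obtain ⟨I, hI⟩ := hhyp.exists_le_gp_of_gromovEquiv hs (hst.change_base o) (dist x o)
  have hs_ge : ∀ᶠ m in atTop,
      dist o x - liminf (fun n => gp x o (t n)) atTop - δ ≤ gp o x (s m) := by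
    filter_upwards [eventually_ge_atTop I] with m hm
    have ht_ge : ∀ᶠ n in atTop, dist o x - gp o x (s m) - δ ≤ gp x o (t n) := by
      filter_upwards [eventually_ge_atTop I] with n hn
      have hyp := hhyp o x (s m) (t n)
      have hfar : gp o x (t n) ≤ gp o (t n) (s m) :=
        (gp_le_dist_left o x (t n)).trans (gp_comm o (s m) (t n) ▸ hI m n hm hn)
      rw [min_eq_left hfar] at hyp
      linarith [gp_add_gp_eq_dist o x (t n)]
    linarith [le_liminf_of_le (isCoboundedUnder_ge_gp x o t) ht_ge]
  linarith [le_liminf_of_le (isCoboundedUnder_ge_gp o x s) hs_ge]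

lemma IsDeltaHyp.dist_sub_two_mul_liminf_le_busemann (hhyp : IsDeltaHyp X δ)
    (hs : IsGromovSeq o s) (x : X) :
    dist o x - 2 * liminf (fun n => gp o x (s n)) atTop - δ ≤ busemann o s x := by
  have := egp_le_liminf hs.gromovEquiv_self x
  have := hhyp.dist_sub_liminf_le_egp hs x
  unfold busemann
  linarith

lemma IsDeltaHyp.liminf_gp_le_of_frequently_lt (hhyp : IsDeltaHyp X δ) {x : X} {b : ℝ}
    (hb : ∃ᶠ n in atTop, gp o (s n) (t n) < b)
    (hx : ∀ᶠ n in atTop, b + δ ≤ gp o x (t n)) :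
    liminf (fun n => gp o x (s n)) atTop ≤ b + δ := by
  refine liminf_le_of_frequently_le ((hb.and_eventually hx).mono fun n ⟨hbn, hxn⟩ => ?_)
    (isBoundedUnder_ge_gp o (fun _ => x) s)
  have := hhyp o (s n) (t n) x
  rw [gp_comm]
  rcases min_lt_iff.1 (by linarith : min (gp o (s n) x) (gp o x (t n)) < b + δ) with h | h
  · exact h.le
  · linarith

end Limits

section Rays

variable {X : Type*} [MetricSpace X] {c : ℝ → X}

lemma sub_dist_le_dist_of_ray
    (hray : ∀ a a' : ℝ, 0 ≤ a → 0 ≤ a' → dist (c a) (c a') = |a - a'|)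
    {u : ℝ} (hu : 0 ≤ u) (o : X) : u - dist o (c 0) ≤ dist o (c u) := by
  have := dist_triangle_left (c 0) (c u) o
  rw [hray 0 u le_rfl hu, zero_sub, abs_neg, abs_of_nonneg hu] at this
  linarith

lemma sub_dist_le_gp_of_ray
    (hray : ∀ a a' : ℝ, 0 ≤ a → 0 ≤ a' → dist (c a) (c a') = |a - a'|)
    {u v : ℝ} (hu : 0 ≤ u) (huv : u ≤ v) (o : X) : u - dist o (c 0) ≤ gp o (c u) (c v) := by
  have hu' := sub_dist_le_dist_of_ray hray hu o
  have hv' := sub_dist_le_dist_of_ray hray (hu.trans huv) o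
  have huv' := hray u v hu (hu.trans huv)
  rw [abs_of_nonpos (by linarith)] at huv'
  unfold gp
  rw [dist_comm (c u) o, dist_comm (c v) o]
  linarith

lemma IsDeltaHyp.eventually_le_gp_of_ray {δ : ℝ} (hhyp : IsDeltaHyp X δ) {o : X} {t : ℕ → X}
    (hray : ∀ a a' : ℝ, 0 ≤ a → 0 ≤ a' → dist (c a) (c a') = |a - a'|)
    (hcη : GromovEquiv o t (fun n => c n)) {u : ℝ} (hu : 0 ≤ u) :
    ∀ᶠ n in atTop, u - dist o (c 0) - δ ≤ gp o (c u) (t n) := by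
  filter_upwards [tendsto_atTop.1 hcη (u - dist o (c 0)),
    tendsto_natCast_atTop_atTop.eventually_ge_atTop u] with n hn hun
  have := hhyp o (c u) (t n) (c n)
  have := le_min (sub_dist_le_gp_of_ray hray hu hun o) (gp_comm o (t n) (c n) ▸ hn)
  linarith

end Rays

theorem busemann_growth_along_ray_general {X : Type*} [MetricSpace X]
    (δ : ℝ) (hδ : 0 ≤ δ) (hhyp : IsDeltaHyp X δ)
    (o : X) (s t : ℕ → X) (hs : IsGromovSeq o s) (ht : IsGromovSeq o t)
    (hne : ¬ GromovEquiv o s t)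
    (c : ℝ → X) (hray : ∀ a a' : ℝ, 0 ≤ a → 0 ≤ a' → dist (c a) (c a') = |a - a'|)
    (hcη : GromovEquiv o t (fun n => c n)) :
    ∃ T : ℝ, 0 ≤ T ∧ ∀ u : ℝ, T ≤ u →
      busemann o s (c u) ≥ u - dist o (c 0) - 2 * egp2 o s t - 8 * δ := by
  obtain ⟨B, hB⟩ := frequently_gp_le_of_not_gromovEquiv hne
  set A := liminf (fun n => gp o (s n) (t n)) atTop
  refine ⟨max 0 (dist o (c 0) + A + 2 * δ + 1), le_max_left _ _, fun u hu => ?_⟩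
  have hu₀ : 0 ≤ u := (le_max_left _ _).trans hu
  have huA : dist o (c 0) + A + 2 * δ < u := by
    linarith [le_max_right 0 (dist o (c 0) + A + 2 * δ + 1)]
  set L := liminf (fun n => gp o (c u) (s n)) atTop
  have hLA : L ≤ A + δ := by
    by_contra! hAL
    obtain ⟨b, hAb, hb⟩ := exists_between
      (lt_min (by linarith : A < L - δ) (by linarith : A < u - dist o (c 0) - 2 * δ))
    have := min_le_left (L - δ) (u - dist o (c 0) - 2 * δ)
    have := min_le_right (L - δ) (u - dist o (c 0) - 2 * δ)
    have := hhyp.liminf_gp_le_of_frequently_lt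
      (frequently_lt_of_liminf_lt (IsCobounded.of_frequently_le hB) hAb)
      ((hhyp.eventually_le_gp_of_ray hray hcη hu₀).mono fun n h => by linarith)
    linarith
  have := hhyp.liminf_sub_le_egp2 hδ hs ht hne
  have := hhyp.dist_sub_two_mul_liminf_le_busemann hs (c u)
  have := sub_dist_le_dist_of_ray hray hu₀ o
  linarith

/-- If `c : [0,∞) → X` is a geodesic ray in a proper geodesic δ-hyperbolic space
converging to a boundary point `η ≠ ξ` (here `ξ, η` are represented by the Gromov
sequences `s, t`), and `b` is the Busemann function based at `ξ` with base point `o`,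
then for all sufficiently large `u`, `b(c(u)) ≥ u − d(o, c(0)) − 2(ξ|η)_o − 8δ`. -/
theorem busemann_growth_along_ray {X : Type*} [MetricSpace X] [ProperSpace X]
    (δ : ℝ) (hδ : 0 ≤ δ) (hhyp : IsDeltaHyp X δ) (hgeo : GeodesicSpace X)
    (o : X) (s t : ℕ → X) (hs : IsGromovSeq o s) (ht : IsGromovSeq o t)
    (hne : ¬ GromovEquiv o s t)
    (c : ℝ → X) (hray : ∀ a a' : ℝ, 0 ≤ a → 0 ≤ a' → dist (c a) (c a') = |a - a'|)
    (hcη : GromovEquiv o t (fun n => c n)) :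
    ∃ T : ℝ, 0 ≤ T ∧ ∀ u : ℝ, T ≤ u →
      busemann o s (c u) ≥ u - dist o (c 0) - 2 * egp2 o s t - 8 * δ :=
  busemann_growth_along_ray_general δ hδ hhyp o s t hs ht hne c hray hcη
end
end

section
/- Let f: Ω → Ω' be an η-quasisymmetric homeomorphism between bounded A-uniform metric spaces, extended to the completions, and let w ∈ Ω satisfy d(w) = max_{x∈Ω} d(x). Then diam Ω' ≤ 2η(4A) · d'(f(w)), where d'(y) = dist(y, ∂Ω'). -/
open Filter Set Metric Real MeasureTheory UniformSpace

noncomputable section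

/-- The metric boundary of `Ω`: the complement of `Ω` in its metric completion. -/
def mbdry (Ω : Type*) [MetricSpace Ω] : Set (Completion Ω) :=
  (Set.range ((↑) : Ω → Completion Ω))ᶜ

/-- The distance `d(x) = dist(x, ∂Ω)` from `x` to the metric boundary of `Ω`. -/
def bdist {Ω : Type*} [MetricSpace Ω] (x : Ω) : ℝ :=
  Metric.infDist (x : Completion Ω) (mbdry Ω)

/-- `Ω` is an `A`-uniform metric space: every pair of points is joined by an
(arclength parametrized) curve that is `A`-quasiconvex and satisfies the `A`-cigar
condition with respect to the distance to the metric boundary. -/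
def IsUniformSpaceA (Ω : Type*) [MetricSpace Ω] (A : ℝ) : Prop :=
  ∀ x y : Ω, ∃ T : ℝ, ∃ γ : ℝ → Ω, 0 ≤ T ∧ γ 0 = x ∧ γ T = y ∧
    (∀ a ∈ Icc (0:ℝ) T, ∀ b ∈ Icc (0:ℝ) T, dist (γ a) (γ b) ≤ |a - b|) ∧
    eVariationOn γ (Icc 0 T) ≤ ENNReal.ofReal (A * dist x y) ∧
    ∀ t ∈ Icc (0:ℝ) T,
      min (eVariationOn γ (Icc 0 t)) (eVariationOn γ (Icc t T)) ≤
        ENNReal.ofReal (A * bdist (γ t))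

/-!
By the cigar condition at the point of a curve equidistant from its endpoints, every distance
in `Ω` is at most `2A·d(w)`. Quasisymmetry between bounded spaces makes `f⁻¹` uniformly
continuous, so it extends to the completions, and since `f` is continuous the extension sends
`∂Ω'` into `∂Ω`. Thus points `b'` of `Ω'` close to a boundary point `ξ` pull back to points `b`
with `d(b) ≤ d(w)/2`, so that `d(w, b) ≥ d(w)/2` and `d(w, x) ≤ 4A·d(w, b)` for every `x`.
Quasisymmetry gives `d'(f w, y) ≤ η(4A)·d'(f w, b')`, and letting `b' → ξ` yields
`d'(f w, y) ≤ η(4A)·d'(f w)` for every `y`, whence the bound on `diam Ω'`.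
-/

open Topology

section Boundary

variable {X Y : Type*} [MetricSpace X] [MetricSpace Y]

lemma mbdry_eq_empty [CompleteSpace X] : mbdry X = ∅ := by
  rw [mbdry, compl_empty_iff, ← Completion.denseRange_coe.closure_range,
    ((Completion.isUniformEmbedding_coe X).isUniformInducing.isComplete_range).isClosed.closure_eq]

lemma nontrivial_of_mbdry_nonempty (h : (mbdry X).Nonempty) : Nontrivial X := by
  rw [← not_subsingleton_iff_nontrivial]
  intro
  simp [mbdry_eq_empty] at h

lemma bdist_nonneg (x : X) : 0 ≤ bdist x :=
  infDist_nonneg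

lemma bdist_le_bdist_add_dist (a b : X) : bdist a ≤ bdist b + dist a b := by
  simpa only [bdist, Completion.dist_eq] using
    infDist_le_infDist_add_dist (x := (a : Completion X)) (y := (b : Completion X))

lemma UniformSpace.Completion.tendsto_coe_comp_comap_nhds {g : Y → X} (hg : UniformContinuous g)
    (ξ : Completion Y) :
    Tendsto (fun y => (g y : Completion X)) (Filter.comap (↑) (𝓝 ξ)) (𝓝 (Completion.map g ξ)) := by
  have := ((Completion.continuous_map (f := g)).tendsto ξ).comp
    (tendsto_comap (f := ((↑) : Y → Completion Y)))
  simpa only [Function.comp_def, Completion.map_coe hg] using this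

lemma UniformSpace.Completion.map_mem_mbdry {f : X → Y} {g : Y → X} (hf : Continuous f)
    (hg : UniformContinuous g) (hfg : Function.LeftInverse f g) {ξ : Completion Y}
    (hξ : ξ ∈ mbdry Y) : Completion.map g ξ ∈ mbdry X := by
  rintro ⟨x, hx⟩
  have hind := (Completion.isUniformEmbedding_coe X).isUniformInducing.isInducing
  have := Completion.isDenseInducing_coe (α := Y) |>.comap_nhds_neBot ξ
  have hgx : Tendsto g (Filter.comap (↑) (𝓝 ξ)) (𝓝 x) := by
    rw [hind.tendsto_nhds_iff, hx]
    exact Completion.tendsto_coe_comp_comap_nhds hg ξ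
  have hfx : Tendsto (fun y => y) (Filter.comap (↑) (𝓝 ξ)) (𝓝 (f x)) := by
    simpa only [Function.comp_def, hfg _] using (hf.tendsto x).comp hgx
  exact hξ ⟨f x, tendsto_nhds_unique
    ((Completion.continuous_coe Y).continuousAt.tendsto.comp hfx) tendsto_comap⟩

lemma tendsto_bdist_comap_nhds {g : Y → X} (hg : UniformContinuous g) {ξ : Completion Y}
    (hξ : Completion.map g ξ ∈ mbdry X) :
    Tendsto (fun y => bdist (g y)) (comap (↑) (𝓝 ξ)) (𝓝 0) := by
  refine squeeze_zero (fun _ => infDist_nonneg) (fun y => infDist_le_dist_of_mem hξ) ?_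
  exact tendsto_iff_dist_tendsto_zero.mp (Completion.tendsto_coe_comp_comap_nhds hg ξ)

end Boundary

lemma exists_dist_eq_dist_of_continuousOn {E : Type*} [PseudoMetricSpace E] {γ : ℝ → E}
    {a b : ℝ} (hab : a ≤ b) (hγ : ContinuousOn γ (Icc a b)) :
    ∃ t ∈ Icc a b, dist (γ a) (γ t) = dist (γ t) (γ b) := by
  have hcont : ContinuousOn (fun t => dist (γ a) (γ t) - dist (γ t) (γ b)) (Icc a b) := by
    fun_prop
  have hzero : (0 : ℝ) ∈ Icc (dist (γ a) (γ a) - dist (γ a) (γ b))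
      (dist (γ a) (γ b) - dist (γ b) (γ b)) := by
    simp only [dist_self, zero_sub, sub_zero, mem_Icc, Left.neg_nonpos_iff, and_self, dist_nonneg]
  obtain ⟨t, ht, hzero⟩ := intermediate_value_Icc hab hcont hzero
  exact ⟨t, ht, sub_eq_zero.mp hzero⟩

/-- The cigar condition at the point of the curve equidistant from its endpoints. -/
lemma IsUniformSpaceA.exists_dist_le_two_mul_bdist {X : Type*} [MetricSpace X] {A : ℝ}
    (hX : IsUniformSpaceA X A) (hA : 0 ≤ A) (x y : X) :
    ∃ z : X, dist x y ≤ 2 * A * bdist z := by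
  obtain ⟨T, γ, hT, rfl, rfl, hlip, -, hcigar⟩ := hX x y
  have hγ : LipschitzOnWith 1 γ (Icc 0 T) :=
    LipschitzOnWith.of_dist_le_mul fun a ha b hb => by simpa [Real.dist_eq] using hlip a ha b hb
  obtain ⟨t, ht, hmid⟩ := exists_dist_eq_dist_of_continuousOn hT hγ.continuousOn
  have hleft : ENNReal.ofReal (dist (γ 0) (γ t)) ≤ eVariationOn γ (Icc 0 t) := by
    rw [← edist_dist]
    exact eVariationOn.edist_le γ (left_mem_Icc.mpr ht.1) (right_mem_Icc.mpr ht.1)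
  have hright : ENNReal.ofReal (dist (γ t) (γ T)) ≤ eVariationOn γ (Icc t T) := by
    rw [← edist_dist]
    exact eVariationOn.edist_le γ (left_mem_Icc.mpr ht.2) (right_mem_Icc.mpr ht.2)
  have hhalf : dist (γ 0) (γ t) ≤ A * bdist (γ t) := by
    rw [← ENNReal.ofReal_le_ofReal_iff (mul_nonneg hA (bdist_nonneg _))]
    exact (le_min hleft (hmid ▸ hright)).trans (hcigar t ht)
  refine ⟨γ t, ?_⟩
  linarith [dist_triangle (γ 0) (γ t) (γ T)]

lemma IsUniformSpaceA.dist_le_two_mul_bdist {X : Type*} [MetricSpace X] {A : ℝ}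
    (hX : IsUniformSpaceA X A) (hA : 0 ≤ A) {w : X} (hw : ∀ x : X, bdist x ≤ bdist w)
    (x y : X) : dist x y ≤ 2 * A * bdist w := by
  obtain ⟨z, hz⟩ := hX.exists_dist_le_two_mul_bdist hA x y
  exact hz.trans (mul_le_mul_of_nonneg_left (hw z) (by positivity))

lemma exists_diam_div_four_le_dist {X : Type*} [PseudoMetricSpace X] (x : X) :
    ∃ y : X, diam (univ : Set X) / 4 ≤ dist x y := by
  by_contra! h
  have hdiam : diam (univ : Set X) ≤ 2 * (diam (univ : Set X) / 4) :=
    diam_le_of_subset_closedBall (by positivity) fun y _ => mem_closedBall'.mpr (h y).le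
  linarith [h x, dist_self x]

section Quasisymmetric

variable {X Y : Type*} [MetricSpace X] [MetricSpace Y]

def IsQuasisymmetric (η : ℝ → ℝ) (f : X → Y) : Prop :=
  ∀ (x a b : X) (u : ℝ), 0 ≤ u → dist x a ≤ u * dist x b →
    dist (f x) (f a) ≤ η u * dist (f x) (f b)

variable {η : ℝ → ℝ}

/-- If `f⁻¹` moved two close points `ε` apart, quasisymmetry with ratio `diam X / ε` would
squeeze a point at distance `≥ diam Y / 4` from one of them into a small ball. -/
lemma IsQuasisymmetric.uniformContinuous_symm {f : X ≃ Y} (hf : IsQuasisymmetric η f)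
    (hX : Bornology.IsBounded (univ : Set X)) (hY : 0 < diam (univ : Set Y)) :
    UniformContinuous f.symm := by
  rw [Metric.uniformContinuous_iff]
  intro ε hε
  set u := diam (univ : Set X) / ε
  refine ⟨diam (univ : Set Y) / (4 * max (η u) 1), by positivity, fun {y₁ y₂} hy => ?_⟩
  by_contra! hfar
  obtain ⟨z, hz⟩ := exists_diam_div_four_le_dist y₁
  have hratio : dist (f.symm y₁) (f.symm z) ≤ u * dist (f.symm y₁) (f.symm y₂) :=
    calc dist (f.symm y₁) (f.symm z) ≤ diam (univ : Set X) :=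
          dist_le_diam_of_mem hX trivial trivial
      _ = u * ε := (div_mul_cancel₀ _ hε.ne').symm
      _ ≤ u * dist (f.symm y₁) (f.symm y₂) := by gcongr
  have hqs := hf _ _ _ u (by positivity) hratio
  simp only [Equiv.apply_symm_apply] at hqs
  have hsmall := (lt_div_iff₀ (by positivity)).mp hy
  have hmax : η u * dist y₁ y₂ ≤ max (η u) 1 * dist y₁ y₂ := by gcongr; exact le_max_left _ _
  linarith

lemma IsQuasisymmetric.dist_le_mul_bdist {f : X ≃ₜ Y} (hf : IsQuasisymmetric η f)
    (hg : UniformContinuous f.symm) (hY : (mbdry Y).Nonempty) {u : ℝ} (hu : 0 ≤ u)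
    (hηu : 0 < η u) {w : X} (hw0 : 0 < bdist w) (hw : ∀ x : X, 2 * dist w x ≤ u * bdist w)
    (y : Y) : dist (f w) y ≤ η u * bdist (f w) := by
  rw [← div_le_iff₀' hηu, bdist, le_infDist hY]
  intro ξ hξ
  rw [div_le_iff₀' hηu]
  have := (Completion.isDenseInducing_coe (α := Y)).comap_nhds_neBot ξ
  have hξ' := Completion.map_mem_mbdry f.continuous hg f.apply_symm_apply hξ
  have hnear : ∀ᶠ b in comap (↑) (𝓝 ξ), bdist (f.symm b) < bdist w / 2 :=
    (tendsto_bdist_comap_nhds hg hξ').eventually (gt_mem_nhds (half_pos hw0))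
  have hlim : Tendsto (fun b : Y => η u * dist (f w) b) (comap (↑) (𝓝 ξ))
      (𝓝 (η u * dist (f w : Completion Y) ξ)) := by
    have h : Tendsto (fun b : Y => dist (f w : Completion Y) b) (comap (↑) (𝓝 ξ))
        (𝓝 (dist (f w : Completion Y) ξ)) := tendsto_const_nhds.dist tendsto_comap
    simpa only [Completion.dist_eq] using h.const_mul (η u)
  refine ge_of_tendsto hlim (hnear.mono fun b hb => ?_)
  have hwb : bdist w < 2 * dist w (f.symm b) := by
    linarith [bdist_le_bdist_add_dist w (f.symm b)]
  have hratio : dist w (f.symm y) ≤ u * dist w (f.symm b) := by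
    nlinarith [hw (f.symm y), mul_le_mul_of_nonneg_left hwb.le hu]
  simpa only [Homeomorph.apply_symm_apply] using hf w (f.symm y) (f.symm b) u hu hratio

end Quasisymmetric

theorem diam_image_le_qs_general {Ω Ω' : Type*} [MetricSpace Ω] [MetricSpace Ω']
    (A : ℝ) (hA : 1 ≤ A)
    (hnc : (mbdry Ω).Nonempty) (hnc' : (mbdry Ω').Nonempty)
    (hbdd : Bornology.IsBounded (Set.univ : Set Ω))
    (hbdd' : Bornology.IsBounded (Set.univ : Set Ω'))
    (huni : IsUniformSpaceA Ω A)
    (f : Ω ≃ₜ Ω') (η : ℝ → ℝ)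
    (hη0 : η 0 = 0) (hηmono : StrictMonoOn η (Ici 0))
    (hqs : ∀ (x a b : Ω) (u : ℝ), 0 ≤ u →
      dist x a ≤ u * dist x b → dist (f x) (f a) ≤ η u * dist (f x) (f b))
    (w : Ω) (hw : ∀ x : Ω, bdist x ≤ bdist w) :
    Metric.diam (Set.univ : Set Ω') ≤ 2 * η (4 * A) * bdist (f w) := by
  have hqs : IsQuasisymmetric η f := hqs
  have hη : 0 < η (4 * A) := hη0 ▸ hηmono self_mem_Ici (mem_Ici.mpr (by linarith)) (by linarith)
  have hdist := huni.dist_le_two_mul_bdist (by linarith) hw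
  have : Nontrivial Ω := nontrivial_of_mbdry_nonempty hnc
  have : Nontrivial Ω' := nontrivial_of_mbdry_nonempty hnc'
  obtain ⟨x, hx⟩ := exists_ne w
  have hw0 : 0 < bdist w :=
    pos_of_mul_pos_right ((dist_pos.mpr hx).trans_le (hdist x w)) (by positivity)
  have hg := hqs.uniformContinuous_symm (f := f.toEquiv) hbdd (diam_pos nontrivial_univ hbdd')
  have hball : ∀ y, dist (f w) y ≤ η (4 * A) * bdist (f w) :=
    hqs.dist_le_mul_bdist hg hnc' (by linarith) hη hw0 fun x => by linarith [hdist w x]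
  calc diam (univ : Set Ω') ≤ 2 * (η (4 * A) * bdist (f w)) :=
        diam_le_of_subset_closedBall (mul_nonneg hη.le (bdist_nonneg _))
          fun y _ => mem_closedBall'.mpr (hball y)
    _ = 2 * η (4 * A) * bdist (f w) := (mul_assoc _ _ _).symm

/-- If `f : Ω → Ω'` is an `η`-quasisymmetric homeomorphism between bounded `A`-uniform
metric spaces and `w ∈ Ω` maximizes the distance to the boundary, then
`diam Ω' ≤ 2η(4A)·d'(f(w))`. -/
theorem diam_image_le_qs {Ω Ω' : Type*} [MetricSpace Ω] [MetricSpace Ω']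
    [LocallyCompactSpace Ω] [LocallyCompactSpace Ω']
    (A : ℝ) (hA : 1 ≤ A)
    (hnc : (mbdry Ω).Nonempty) (hnc' : (mbdry Ω').Nonempty)
    (hbdd : Bornology.IsBounded (Set.univ : Set Ω))
    (hbdd' : Bornology.IsBounded (Set.univ : Set Ω'))
    (huni : IsUniformSpaceA Ω A) (huni' : IsUniformSpaceA Ω' A)
    (f : Ω ≃ₜ Ω') (η : ℝ → ℝ)
    (hη0 : η 0 = 0) (hηmono : StrictMonoOn η (Ici 0)) (hηcont : ContinuousOn η (Ici 0))
    (hηsurj : ∀ y : ℝ, 0 ≤ y → ∃ u : ℝ, 0 ≤ u ∧ η u = y)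
    (hqs : ∀ (x a b : Ω) (u : ℝ), 0 ≤ u →
      dist x a ≤ u * dist x b → dist (f x) (f a) ≤ η u * dist (f x) (f b))
    (w : Ω) (hw : ∀ x : Ω, bdist x ≤ bdist w) :
    Metric.diam (Set.univ : Set Ω') ≤ 2 * η (4 * A) * bdist (f w) :=
  diam_image_le_qs_general A hA hnc hnc' hbdd hbdd' huni f η hη0 hηmono hqs w hw
end
end

section
/- Let f: Ω → Ω' be an η-quasisymmetric homeomorphism between minimally nice metric spaces and let γ ⊂ Ω be a strong L-cigar arc with endpoints a, b. Then f(γ) is a strong L'-cigar arc with L' = 2η(2η'(2)L) ∨ 2η(L), where η'(t) = 1/η^{−1}(1/t) is the control function of f^{−1}. -/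
open Filter Set Metric Real MeasureTheory UniformSpace

noncomputable section

/-- A strong `A`-cigar arc (parametrized on `[0,T]`) from `x = γ 0` to `y = γ T`:
`diam γ ≤ A·d(x,y)` and for all `t`, `min(diam γ[x,z], diam γ[z,y]) ≤ A·d(z)`. -/
def IsStrongCigar {Ω : Type*} [MetricSpace Ω] (γ : ℝ → Ω) (T A : ℝ) : Prop :=
  Metric.diam (γ '' Icc 0 T) ≤ A * dist (γ 0) (γ T) ∧
  ∀ t ∈ Icc (0:ℝ) T,
    min (Metric.diam (γ '' Icc 0 t)) (Metric.diam (γ '' Icc t T)) ≤ A * bdist (γ t)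

/-!
The heart of the matter is that `d(z,p) ≤ L·d(z)` implies `d(f z, f p) ≤ η(L)·d(f z)`. Let `y ∈ Ω'`
tend to a boundary point `ζ` of `Ω'`. For `c < d(z)` the closed ball `B(z,c)` is complete, and by
quasisymmetry of `f⁻¹` a Cauchy family in `Ω'` staying away from `f z` pulls back to a Cauchy
family; hence the points `f⁻¹ y` eventually leave `B(z,c)`, for otherwise `ζ` would be the image
of their limit. Quasisymmetry against `f⁻¹ y` then gives `d(f z, f p) ≤ η(L d(z)/c)·d(f z, ζ)`,
and `c → d(z)` uses the continuity of `η`. So a subarc of diameter `≤ L·d(z)` through `z` has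
an image of diameter `≤ 2η(L)·d(f z)`, and the whole arc, lying in `B(a, L·d(a,b))`, has an image
of diameter `≤ 2η(L)·d(f a, f b)`.
-/

open Topology

section

variable {X Y : Type*} [MetricSpace X] [MetricSpace Y]

lemma closedBall_subset_range_coe {z : X} {c : ℝ} (hc : c < bdist z) :
    closedBall (z : Completion X) c ⊆ range ((↑) : X → Completion X) := fun ξ hξ => by
  by_contra hξX
  exact (hc.trans_le (infDist_le_dist_of_mem hξX)).not_ge (mem_closedBall'.1 hξ)

lemma isComplete_closedBall_of_lt_bdist {z : X} {c : ℝ} (hc : c < bdist z) :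
    IsComplete (closedBall z c) := by
  rw [← isComplete_image_iff (Completion.isUniformInducing_coe X),
    ← Completion.coe_isometry.preimage_closedBall,
    image_preimage_eq_of_subset (closedBall_subset_range_coe hc)]
  exact isClosed_closedBall.isComplete

lemma diam_image_le_two_mul_of_forall_dist_le {α : Type*} {f : α → Y} {s : Set α} {x : α}
    {R : ℝ} (hR : 0 ≤ R) (h : ∀ p ∈ s, dist (f x) (f p) ≤ R) :
    diam (f '' s) ≤ 2 * R := by
  have hball : f '' s ⊆ closedBall (f x) R :=
    image_subset_iff.2 fun p hp => mem_closedBall'.2 (h p hp)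
  exact (diam_mono hball isBounded_closedBall).trans (diam_closedBall hR)

def IsQuasisymmetricWith (η : ℝ → ℝ) (f : X → Y) : Prop :=
  ∀ (x a b : X) (u : ℝ), 0 ≤ u →
    dist x a ≤ u * dist x b → dist (f x) (f a) ≤ η u * dist (f x) (f b)

namespace IsQuasisymmetricWith

variable {η : ℝ → ℝ}

lemma dist_le_mul_of_mul_lt {f : X → Y} (hf : IsQuasisymmetricWith η f) {x a b : X} {s : ℝ}
    (hs : 0 < s) (h : dist (f x) (f a) * η (1 / s) < dist (f x) (f b)) :
    dist x a ≤ s * dist x b := by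
  by_contra! hlt
  have hba : dist x b ≤ 1 / s * dist x a := by
    rw [one_div_mul_eq_div, le_div_iff₀ hs]
    linarith
  nlinarith [hf x b a (1 / s) (by positivity) hba, dist_nonneg (x := f x) (y := f a)]

lemma cauchy_of_cauchy_map {f : X → Y} (hf : IsQuasisymmetricWith η f) {F : Filter X}
    (hF : Cauchy (map f F)) {z : X} {c δ : ℝ} (hδ : 0 < δ)
    (hnear : ∀ᶠ x in F, dist x z ≤ c) (hfar : ∀ᶠ x in F, δ ≤ dist (f z) (f x)) :
    Cauchy F := by
  have : NeBot F := hF.1.of_map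
  refine Metric.cauchy_iff.2 ⟨this, fun ε hε => ?_⟩
  set s := ε / (|c| + 1)
  have hs : 0 < s := by positivity
  obtain ⟨t, ht, hclose⟩ := (Metric.cauchy_iff.1 hF).2 (δ / (|η (1 / s)| + 1)) (by positivity)
  refine ⟨f ⁻¹' t ∩ {x | dist x z ≤ c ∧ δ ≤ dist (f z) (f x)},
    inter_mem ht (hnear.and hfar), ?_⟩
  rintro x ⟨hxt, hxc, hxδ⟩ y ⟨hyt, -⟩
  have hfxy : dist (f x) (f y) * η (1 / s) < dist (f x) (f z) := by
    have hd := (lt_div_iff₀ (by positivity)).1 (hclose _ hxt _ hyt)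
    calc dist (f x) (f y) * η (1 / s) ≤ dist (f x) (f y) * |η (1 / s)| :=
          mul_le_mul_of_nonneg_left (le_abs_self _) dist_nonneg
      _ < δ := by nlinarith [dist_nonneg (x := f x) (y := f y)]
      _ ≤ dist (f x) (f z) := by rwa [dist_comm]
  calc dist x y ≤ s * dist x z := hf.dist_le_mul_of_mul_lt hs hfxy
    _ ≤ s * |c| := by gcongr; exact hxc.trans (le_abs_self c)
    _ < ε := by
      rw [div_mul_eq_mul_div, div_lt_iff₀ (by positivity)]
      nlinarith [abs_nonneg c]

lemma eventually_lt_dist_symm {f : X ≃ₜ Y} (hf : IsQuasisymmetricWith η f) {ζ : Completion Y}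
    (hζ : ζ ∈ mbdry Y) (z : X) {c : ℝ} (hc : c < bdist z) :
    ∀ᶠ y in comap (↑) (𝓝 ζ), c < dist z (f.symm y) := by
  by_contra hfreq
  simp only [not_eventually, not_lt] at hfreq
  set G := comap ((↑) : Y → Completion Y) (𝓝 ζ) ⊓ 𝓟 (f.symm ⁻¹' closedBall z c)
  have : NeBot G := frequently_iff_neBot.1 (hfreq.mono fun y hy => mem_closedBall'.2 hy)
  have hGζ : Tendsto ((↑) : Y → Completion Y) G (𝓝 ζ) :=
    tendsto_comap.mono_left inf_le_left
  set δ := dist ((f z : Y) : Completion Y) ζ / 2 with hδ_def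
  have hδ : 0 < δ := half_pos (dist_pos.2 fun h => hζ ⟨f z, h⟩)
  have hfar : ∀ᶠ y in G, δ ≤ dist (f z) y := by
    filter_upwards [hGζ (ball_mem_nhds ζ hδ)] with y hy
    rw [← Completion.dist_eq]
    linarith [dist_triangle ((f z : Y) : Completion Y) y ζ, mem_ball.1 hy, hδ_def]
  have hcauchy : Cauchy (map f.symm G) := by
    refine hf.cauchy_of_cauchy_map (z := z) ?_ hδ (mem_inf_of_right (mem_principal_self _)) ?_
    · rw [map_map, f.self_comp_symm, map_id,
        ← (Completion.isUniformInducing_coe Y).cauchy_map_iff]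
      exact cauchy_nhds.mono hGζ
    · simpa only [eventually_map, Homeomorph.apply_symm_apply] using hfar
  obtain ⟨x, -, hx⟩ := isComplete_closedBall_of_lt_bdist hc _ hcauchy
    (le_principal_iff.2 (mem_map.2 (mem_inf_of_right (mem_principal_self _))))
  have hGx : Tendsto (fun y => ((f (f.symm y) : Y) : Completion Y)) G (𝓝 (f x : Completion Y)) :=
    ((Completion.continuous_coe Y).tendsto _).comp ((f.continuous.tendsto x).comp hx)
  simp only [Homeomorph.apply_symm_apply] at hGx
  exact hζ ⟨f x, tendsto_nhds_unique hGx hGζ⟩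

lemma dist_le_mul_bdist_of_lt_bdist {f : X ≃ₜ Y} (hf : IsQuasisymmetricWith η f)
    (hY : (mbdry Y).Nonempty) {z p : X} {u c : ℝ} (hu : 0 ≤ u) (hηu : 0 < η u)
    (hc : c < bdist z) (hp : dist z p ≤ u * c) : dist (f z) (f p) ≤ η u * bdist (f z) := by
  have hζ : ∀ ζ ∈ mbdry Y,
      dist (f z) (f p) / η u ≤ dist ((f z : Y) : Completion Y) ζ := by
    intro ζ hζ
    have : NeBot (comap ((↑) : Y → Completion Y) (𝓝 ζ)) :=
      Completion.isDenseInducing_coe.comap_nhds_neBot ζ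
    rw [div_le_iff₀' hηu]
    have hlim : Tendsto (fun y : Y => η u * dist ((f z : Y) : Completion Y) y)
        (comap (↑) (𝓝 ζ)) (𝓝 (η u * dist ((f z : Y) : Completion Y) ζ)) :=
      (tendsto_const_nhds.dist tendsto_comap).const_mul (η u)
    refine ge_of_tendsto hlim ?_
    filter_upwards [hf.eventually_lt_dist_symm hζ z hc] with y hy
    have := hf z p (f.symm y) u hu (hp.trans (by gcongr))
    rwa [f.apply_symm_apply, ← Completion.dist_eq (f z) y] at this
  rw [← div_le_iff₀' hηu]
  exact (le_infDist hY).2 hζ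

lemma dist_le_mul_bdist {f : X ≃ₜ Y} (hf : IsQuasisymmetricWith η f) (hY : (mbdry Y).Nonempty)
    (hηpos : ∀ u, 0 < u → 0 < η u) (hηcont : ContinuousOn η (Ici 0)) {L : ℝ} (hL : 0 < L)
    {z p : X} (hp : dist z p ≤ L * bdist z) : dist (f z) (f p) ≤ η L * bdist (f z) := by
  rcases (bdist_nonneg z).eq_or_lt with hz | hz
  · obtain rfl : z = p := dist_le_zero.1 (by simpa [← hz] using hp)
    simpa using mul_nonneg (hηpos L hL).le (bdist_nonneg (f z))
  have hlt : ∀ u ∈ Ioi L, dist (f z) (f p) ≤ η u * bdist (f z) := fun u hu => by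
    have hu0 : 0 < u := hL.trans hu
    refine hf.dist_le_mul_bdist_of_lt_bdist hY hu0.le (hηpos u hu0) (c := L * bdist z / u) ?_ ?_
    · rw [div_lt_iff₀ hu0]
      nlinarith [mem_Ioi.1 hu]
    · rwa [mul_div_cancel₀ _ hu0.ne']
  have hlim : Tendsto (fun u => η u * bdist (f z)) (𝓝[>] L) (𝓝 (η L * bdist (f z))) :=
    (((hηcont L hL.le).mono fun u hu => hL.le.trans (le_of_lt hu)).tendsto).mul_const _
  exact ge_of_tendsto hlim (eventually_nhdsWithin_of_forall hlt)

variable {L : ℝ}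

lemma diam_image_le_of_diam_le_mul_dist {f : X → Y} (hf : IsQuasisymmetricWith η f)
    (hL : 0 ≤ L) (hηL : 0 ≤ η L) {s : Set X} (hs : Bornology.IsBounded s) {a b : X} (ha : a ∈ s)
    (hdiam : diam s ≤ L * dist a b) : diam (f '' s) ≤ 2 * η L * dist (f a) (f b) := by
  rw [mul_assoc]
  exact diam_image_le_two_mul_of_forall_dist_le (mul_nonneg hηL dist_nonneg) fun p hp =>
    hf a p b L hL ((dist_le_diam_of_mem hs ha hp).trans hdiam)

lemma diam_image_le_of_diam_le_mul_bdist {f : X ≃ₜ Y} (hf : IsQuasisymmetricWith η f)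
    (hY : (mbdry Y).Nonempty) (hηpos : ∀ u, 0 < u → 0 < η u)
    (hηcont : ContinuousOn η (Ici 0)) (hL : 0 < L) {s : Set X} (hs : Bornology.IsBounded s)
    {z : X} (hz : z ∈ s) (hdiam : diam s ≤ L * bdist z) :
    diam (f '' s) ≤ 2 * η L * bdist (f z) := by
  rw [mul_assoc]
  exact diam_image_le_two_mul_of_forall_dist_le (mul_nonneg (hηpos L hL).le (bdist_nonneg _))
    fun p hp => hf.dist_le_mul_bdist hY hηpos hηcont hL
      ((dist_le_diam_of_mem hs hz hp).trans hdiam)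

end IsQuasisymmetricWith

end

theorem strong_cigar_qs_invariant_general {Ω Ω' : Type*} [MetricSpace Ω] [MetricSpace Ω']
    (hnc' : (mbdry Ω').Nonempty)
    (f : Ω ≃ₜ Ω') (η η' : ℝ → ℝ)
    (hη0 : η 0 = 0) (hηmono : StrictMonoOn η (Ici 0)) (hηcont : ContinuousOn η (Ici 0))
    (hqs : ∀ (x a b : Ω) (u : ℝ), 0 ≤ u →
      dist x a ≤ u * dist x b → dist (f x) (f a) ≤ η u * dist (f x) (f b))
    (L : ℝ) (hL : 1 ≤ L)
    (T : ℝ) (hT : 0 ≤ T) (γ : ℝ → Ω)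
    (hcont : ContinuousOn γ (Icc 0 T))
    (hcigar : IsStrongCigar γ T L) :
    IsStrongCigar (fun u => f (γ u)) T (max (2 * η (2 * η' 2 * L)) (2 * η L)) := by
  have hηpos : ∀ u, 0 < u → 0 < η u := fun u hu => by
    simpa [hη0] using hηmono self_mem_Ici hu.le hu
  have hL0 : 0 < L := one_pos.trans_le hL
  set L' := max (2 * η (2 * η' 2 * L)) (2 * η L)
  have hL' : 2 * η L ≤ L' := le_max_right _ _
  have hbdd : ∀ S ⊆ Icc 0 T, Bornology.IsBounded (γ '' S) := fun S hS =>
    (isCompact_Icc.image_of_continuousOn hcont).isBounded.subset (image_mono hS)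
  have himage : ∀ S, (fun u => f (γ u)) '' S = f '' (γ '' S) := fun S =>
    (image_image _ _ _).symm
  have hsubarc : ∀ S ⊆ Icc 0 T, ∀ t ∈ S, diam (γ '' S) ≤ L * bdist (γ t) →
      diam (f '' (γ '' S)) ≤ L' * bdist (f (γ t)) := fun S hS t ht hdiam =>
    (IsQuasisymmetricWith.diam_image_le_of_diam_le_mul_bdist hqs hnc' hηpos hηcont hL0
      (hbdd S hS) (mem_image_of_mem γ ht) hdiam).trans
        (mul_le_mul_of_nonneg_right hL' (bdist_nonneg _))
  refine ⟨?_, fun t ht => ?_⟩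
  · rw [himage]
    exact (IsQuasisymmetricWith.diam_image_le_of_diam_le_mul_dist hqs hL0.le (hηpos L hL0).le
      (hbdd _ subset_rfl) (mem_image_of_mem γ (left_mem_Icc.2 hT)) hcigar.1).trans
        (mul_le_mul_of_nonneg_right hL' dist_nonneg)
  · simp only [himage]
    rcases min_le_iff.1 (hcigar.2 t ht) with h | h
    · exact min_le_of_left_le (hsubarc _ (Icc_subset_Icc_right ht.2) t ⟨ht.1, le_rfl⟩ h)
    · exact min_le_of_right_le (hsubarc _ (Icc_subset_Icc_left ht.1) t ⟨le_rfl, ht.2⟩ h)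

/-- Quasisymmetric maps preserve strong cigar arcs: if `f : Ω → Ω'` is an
`η`-quasisymmetric homeomorphism between minimally nice spaces and `γ` is a strong
`L`-cigar arc, then `f ∘ γ` is a strong `L'`-cigar arc with
`L' = 2η(2η'(2)L) ∨ 2η(L)`, where `η'(t) = 1/η⁻¹(1/t)` is the control function of
`f⁻¹`. -/
theorem strong_cigar_qs_invariant {Ω Ω' : Type*} [MetricSpace Ω] [MetricSpace Ω']
    [LocallyCompactSpace Ω] [LocallyCompactSpace Ω']
    (hnc : (mbdry Ω).Nonempty) (hnc' : (mbdry Ω').Nonempty)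
    (f : Ω ≃ₜ Ω') (η η' : ℝ → ℝ)
    (hη0 : η 0 = 0) (hηmono : StrictMonoOn η (Ici 0)) (hηcont : ContinuousOn η (Ici 0))
    (hηsurj : ∀ y : ℝ, 0 ≤ y → ∃ u : ℝ, 0 ≤ u ∧ η u = y)
    (hqs : ∀ (x a b : Ω) (u : ℝ), 0 ≤ u →
      dist x a ≤ u * dist x b → dist (f x) (f a) ≤ η u * dist (f x) (f b))
    (hη'pos : ∀ u : ℝ, 0 < u → 0 < η' u)
    (hη'def : ∀ u : ℝ, 0 < u → η (1 / η' u) = 1 / u)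
    (L : ℝ) (hL : 1 ≤ L)
    (T : ℝ) (hT : 0 ≤ T) (γ : ℝ → Ω)
    (hcont : ContinuousOn γ (Icc 0 T)) (hinj : Set.InjOn γ (Icc 0 T))
    (hcigar : IsStrongCigar γ T L) :
    IsStrongCigar (fun u => f (γ u)) T (max (2 * η (2 * η' 2 * L)) (2 * η L)) :=
  strong_cigar_qs_invariant_general hnc' f η η' hη0 hηmono hηcont hqs L hL T hT γ hcont hcigar
end
end
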